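/- arXiv:1410.1446 — 2 statements merged into one kernel-verified Lean document; each statement's English description precedes it below -/
import Mathlib

section
/- Let 𝔥 be a Hilbert space (or any vector space) and H_a a vector space with a distinguished vector |0⟩ and dual covector ⟨0|. Suppose for each site k ∈ {1,…,n} and each parameter p ∈ ℂ one has operators L_{a,k}(p) acting on 𝔥^{⊗n} ⊗ H_a, such that: (i) operators at distinct sites commute, i.e. [L_{a₁,k}(p), L_{a₂,l}(p')] = 0 for k ≠ l (acting in a doubled auxiliary space H_a ⊗ H_a with indices a₁, a₂); (ii) there exists an invertible Ř(p,p') ∈ End(H_a⊗H_a) with Ř(p,p')·L_{a₁,k}(p)·L_{a₂,k}(p') = L_{a₁,k}(p')·L_{a₂,k}(p)·Ř(p,p') for each k; and (iii) ⟨0,0|Ř(p,p') = ⟨0,0| and Ř(p,p')|0,0⟩ = |0,0⟩. Then the operators S(p) = ⟨0| L_{a,1}(p)⋯L_{a,n}(p) |0⟩ on 𝔥^{⊗n} satisfy [S(p), S(p')] = 0 for all p, p' ∈ ℂ. -/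
open TensorProduct

noncomputable section

variable (H Ha : Type*) [AddCommGroup H] [Module ℂ H] [AddCommGroup Ha] [Module ℂ Ha]

/-- Embedding of an operator on `H ⊗ Ha` acting on the physical space and the *first*
auxiliary copy of the doubled space `(H ⊗ Ha) ⊗ Ha`. -/
def embA1 (L : Module.End ℂ (H ⊗[ℂ] Ha)) : Module.End ℂ ((H ⊗[ℂ] Ha) ⊗[ℂ] Ha) :=
  TensorProduct.map L LinearMap.id

/-- The swap of the two auxiliary copies in `(H ⊗ Ha) ⊗ Ha`. -/
def auxSwap : Module.End ℂ ((H ⊗[ℂ] Ha) ⊗[ℂ] Ha) :=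
  (TensorProduct.assoc ℂ H Ha Ha).symm.toLinearMap ∘ₗ
    TensorProduct.map LinearMap.id (TensorProduct.comm ℂ Ha Ha).toLinearMap ∘ₗ
      (TensorProduct.assoc ℂ H Ha Ha).toLinearMap

/-- Embedding of an operator on `H ⊗ Ha` acting on the physical space and the *second*
auxiliary copy. -/
def embA2 (L : Module.End ℂ (H ⊗[ℂ] Ha)) : Module.End ℂ ((H ⊗[ℂ] Ha) ⊗[ℂ] Ha) :=
  auxSwap H Ha ∘ₗ embA1 H Ha L ∘ₗ auxSwap H Ha

/-- Embedding of an operator on `Ha ⊗ Ha` acting on the two auxiliary copies only. -/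
def embR (R : Module.End ℂ (Ha ⊗[ℂ] Ha)) : Module.End ℂ ((H ⊗[ℂ] Ha) ⊗[ℂ] Ha) :=
  (TensorProduct.assoc ℂ H Ha Ha).symm.toLinearMap ∘ₗ
    TensorProduct.map LinearMap.id R ∘ₗ (TensorProduct.assoc ℂ H Ha Ha).toLinearMap

/-- Insertion of the auxiliary vacuum vector `|0⟩`. -/
def ketMap (v0 : Ha) : H →ₗ[ℂ] H ⊗[ℂ] Ha := (TensorProduct.mk ℂ H Ha).flip v0

/-- Contraction with the auxiliary vacuum covector `⟨0|`. -/
def braMap (f0 : Ha →ₗ[ℂ] ℂ) : H ⊗[ℂ] Ha →ₗ[ℂ] H :=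
  (TensorProduct.rid ℂ H).toLinearMap ∘ₗ TensorProduct.map LinearMap.id f0

/-- Vacuum expectation `⟨0| X |0⟩` over the auxiliary space, mapping an operator on
`H ⊗ Ha` to an operator on `H`. -/
def vacS (v0 : Ha) (f0 : Ha →ₗ[ℂ] ℂ) (X : Module.End ℂ (H ⊗[ℂ] Ha)) : Module.End ℂ H :=
  braMap H Ha f0 ∘ₗ X ∘ₗ ketMap H Ha v0

/-- The contraction of `f0 ⊗ f0` (the doubled vacuum covector `⟨0,0|`). -/
def bra2 (f0 : Ha →ₗ[ℂ] ℂ) : Ha ⊗[ℂ] Ha →ₗ[ℂ] ℂ :=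
  (TensorProduct.lid ℂ ℂ).toLinearMap ∘ₗ TensorProduct.map f0 f0

section Aux

variable (H Ha : Type*) [AddCommGroup H] [Module ℂ H] [AddCommGroup Ha] [Module ℂ Ha]
variable (v0 : Ha) (f0 : Ha →ₗ[ℂ] ℂ)

lemma ketMap_apply (h : H) : ketMap H Ha v0 h = h ⊗ₜ[ℂ] v0 := rfl

lemma braMap_tmul (h : H) (a : Ha) : braMap H Ha f0 (h ⊗ₜ[ℂ] a) = f0 a • h := by
  simp [braMap]

lemma auxSwap_tmul (h : H) (a b : Ha) :
    auxSwap H Ha ((h ⊗ₜ[ℂ] a) ⊗ₜ[ℂ] b) = (h ⊗ₜ[ℂ] b) ⊗ₜ[ℂ] a := by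
  simp [auxSwap]

lemma embA1_tmul (X : Module.End ℂ (H ⊗[ℂ] Ha)) (z : H ⊗[ℂ] Ha) (b : Ha) :
    embA1 H Ha X (z ⊗ₜ[ℂ] b) = X z ⊗ₜ[ℂ] b := by
  simp [embA1]

lemma auxSwap_auxSwap (x : (H ⊗[ℂ] Ha) ⊗[ℂ] Ha) :
    auxSwap H Ha (auxSwap H Ha x) = x := by
  have : auxSwap H Ha ∘ₗ auxSwap H Ha = LinearMap.id := by
    apply TensorProduct.ext_threefold
    intro h a b
    simp [auxSwap_tmul]
  exact LinearMap.congr_fun this x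

lemma embA1_one : embA1 H Ha 1 = 1 := by
  ext x
  simp [embA1]

lemma embA1_mul (X Y : Module.End ℂ (H ⊗[ℂ] Ha)) :
    embA1 H Ha (X * Y) = embA1 H Ha X * embA1 H Ha Y := by
  have h := TensorProduct.map_comp X (LinearMap.id : Ha →ₗ[ℂ] Ha) Y LinearMap.id
  rw [LinearMap.id_comp] at h
  simpa [embA1, Module.End.mul_eq_comp] using h

lemma embA2_one : embA2 H Ha 1 = 1 := by
  refine LinearMap.ext fun x => ?_
  simp only [embA2, LinearMap.comp_apply, embA1_one, Module.End.one_apply]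
  exact auxSwap_auxSwap H Ha x

lemma embA2_mul (X Y : Module.End ℂ (H ⊗[ℂ] Ha)) :
    embA2 H Ha (X * Y) = embA2 H Ha X * embA2 H Ha Y := by
  refine LinearMap.ext fun x => ?_
  simp only [embA2, LinearMap.comp_apply, embA1_mul, Module.End.mul_apply, auxSwap_auxSwap]

lemma embA1_prod (l : List (Module.End ℂ (H ⊗[ℂ] Ha))) :
    embA1 H Ha l.prod = (l.map (embA1 H Ha)).prod := by
  induction l with
  | nil =>
      simp only [List.map_nil, List.prod_nil]
      exact embA1_one H Ha
  | cons x xs ih => simp [embA1_mul, ih]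

lemma embA2_prod (l : List (Module.End ℂ (H ⊗[ℂ] Ha))) :
    embA2 H Ha l.prod = (l.map (embA2 H Ha)).prod := by
  induction l with
  | nil =>
      simp only [List.map_nil, List.prod_nil]
      exact embA2_one H Ha
  | cons x xs ih => simp [embA2_mul, ih]

lemma embR_apply (A : Module.End ℂ (Ha ⊗[ℂ] Ha)) (x : (H ⊗[ℂ] Ha) ⊗[ℂ] Ha) :
    embR H Ha A x = (TensorProduct.assoc ℂ H Ha Ha).symm
      (TensorProduct.map LinearMap.id A ((TensorProduct.assoc ℂ H Ha Ha) x)) := rfl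

lemma embR_mul (A B : Module.End ℂ (Ha ⊗[ℂ] Ha)) :
    embR H Ha (A * B) = embR H Ha A * embR H Ha B := by
  refine LinearMap.ext fun x => ?_
  have h := TensorProduct.map_comp (LinearMap.id : H →ₗ[ℂ] H) A LinearMap.id B
  rw [LinearMap.id_comp] at h
  simp only [embR_apply, Module.End.mul_apply, LinearEquiv.apply_symm_apply,
    Module.End.mul_eq_comp, h, LinearMap.comp_apply]

lemma embR_one : embR H Ha 1 = 1 := by
  refine LinearMap.ext fun x => ?_
  simp only [embR_apply, Module.End.one_apply]
  rw [show (1 : Module.End ℂ (Ha ⊗[ℂ] Ha)) = LinearMap.id from rfl, TensorProduct.map_id]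
  simp

/-- the combined bra/ket lemma -/
lemma braO_embA1_apply (X : Module.End ℂ (H ⊗[ℂ] Ha)) (u : (H ⊗[ℂ] Ha) ⊗[ℂ] Ha) :
    braMap (H ⊗[ℂ] Ha) Ha f0 (embA1 H Ha X u) = X (braMap (H ⊗[ℂ] Ha) Ha f0 u) := by
  have : braMap (H ⊗[ℂ] Ha) Ha f0 ∘ₗ embA1 H Ha X = X ∘ₗ braMap (H ⊗[ℂ] Ha) Ha f0 := by
    apply TensorProduct.ext'
    intro z b
    simp [embA1_tmul, braMap_tmul, map_smul]
  exact LinearMap.congr_fun this u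

lemma key3_apply (z : H ⊗[ℂ] Ha) :
    braMap (H ⊗[ℂ] Ha) Ha f0 (auxSwap H Ha (z ⊗ₜ[ℂ] v0))
      = ketMap H Ha v0 (braMap H Ha f0 z) := by
  induction z using TensorProduct.induction_on with
  | zero => simp
  | tmul h a =>
      simp [auxSwap_tmul, braMap_tmul, ketMap_apply, TensorProduct.smul_tmul']
  | add x y hx hy =>
      simp only [TensorProduct.add_tmul, map_add, hx, hy]

lemma vacS_mul (X Y : Module.End ℂ (H ⊗[ℂ] Ha)) :
    vacS H Ha v0 f0 X * vacS H Ha v0 f0 Y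
      = (braMap H Ha f0 ∘ₗ braMap (H ⊗[ℂ] Ha) Ha f0) ∘ₗ
          (↑(embA1 H Ha X * embA2 H Ha Y) : (H ⊗[ℂ] Ha) ⊗[ℂ] Ha →ₗ[ℂ] (H ⊗[ℂ] Ha) ⊗[ℂ] Ha) ∘ₗ
          (ketMap (H ⊗[ℂ] Ha) Ha v0 ∘ₗ ketMap H Ha v0) := by
  ext h
  simp only [Module.End.mul_apply, LinearMap.comp_apply, vacS, ketMap_apply]
  have e2 : embA2 H Ha Y ((h ⊗ₜ[ℂ] v0) ⊗ₜ[ℂ] v0)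
      = auxSwap H Ha (Y (h ⊗ₜ[ℂ] v0) ⊗ₜ[ℂ] v0) := by
    simp only [embA2, LinearMap.comp_apply, auxSwap_tmul, embA1_tmul]
  rw [e2, braO_embA1_apply, key3_apply, ketMap_apply]

lemma psi_apply (h : H) (w : Ha ⊗[ℂ] Ha) :
    braMap H Ha f0 (braMap (H ⊗[ℂ] Ha) Ha f0
      ((TensorProduct.assoc ℂ H Ha Ha).symm (h ⊗ₜ[ℂ] w))) = bra2 Ha f0 w • h := by
  induction w using TensorProduct.induction_on with
  | zero => simp
  | tmul a b =>
      simp [TensorProduct.assoc_symm_tmul, braMap_tmul, bra2, smul_smul, mul_comm]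
  | add x y hx hy =>
      simp only [TensorProduct.tmul_add, map_add, hx, hy, add_smul]

lemma B_inv (R : Module.End ℂ (Ha ⊗[ℂ] Ha)) (hbra : bra2 Ha f0 ∘ₗ R = bra2 Ha f0)
    (u : (H ⊗[ℂ] Ha) ⊗[ℂ] Ha) :
    braMap H Ha f0 (braMap (H ⊗[ℂ] Ha) Ha f0 (embR H Ha R u))
      = braMap H Ha f0 (braMap (H ⊗[ℂ] Ha) Ha f0 u) := by
  have : (braMap H Ha f0 ∘ₗ braMap (H ⊗[ℂ] Ha) Ha f0) ∘ₗ embR H Ha R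
      = braMap H Ha f0 ∘ₗ braMap (H ⊗[ℂ] Ha) Ha f0 := by
    apply TensorProduct.ext_threefold
    intro h a b
    have e1 : embR H Ha R ((h ⊗ₜ[ℂ] a) ⊗ₜ[ℂ] b)
        = (TensorProduct.assoc ℂ H Ha Ha).symm (h ⊗ₜ[ℂ] R (a ⊗ₜ[ℂ] b)) := by
      simp [embR_apply]
    have e2 : ((h ⊗ₜ[ℂ] a) ⊗ₜ[ℂ] b : (H ⊗[ℂ] Ha) ⊗[ℂ] Ha)
        = (TensorProduct.assoc ℂ H Ha Ha).symm (h ⊗ₜ[ℂ] (a ⊗ₜ[ℂ] b)) := by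
      simp [TensorProduct.assoc_symm_tmul]
    have e3 : bra2 Ha f0 (R (a ⊗ₜ[ℂ] b)) = bra2 Ha f0 (a ⊗ₜ[ℂ] b) := by
      have := LinearMap.congr_fun hbra (a ⊗ₜ[ℂ] b)
      simpa using this
    simp only [LinearMap.comp_apply]
    rw [e1, psi_apply, e3]
    conv_rhs => rw [e2, psi_apply]
  exact LinearMap.congr_fun this u

lemma K_inv (R : Module.End ℂ (Ha ⊗[ℂ] Ha)) (hket : R (v0 ⊗ₜ[ℂ] v0) = v0 ⊗ₜ[ℂ] v0) (h : H) :
    embR H Ha R ((h ⊗ₜ[ℂ] v0) ⊗ₜ[ℂ] v0) = (h ⊗ₜ[ℂ] v0) ⊗ₜ[ℂ] v0 := by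
  simp only [embR_apply, TensorProduct.assoc_tmul, TensorProduct.map_tmul,
    LinearMap.id_coe, id_eq, hket, TensorProduct.assoc_symm_tmul]

lemma zipper
    (L : ℕ → ℂ → Module.End ℂ (H ⊗[ℂ] Ha))
    (R : ℂ → ℂ → Module.End ℂ (Ha ⊗[ℂ] Ha))
    (hcomm : ∀ k l p p', k ≠ l → Commute (embA1 H Ha (L k p)) (embA2 H Ha (L l p')))
    (hRLL : ∀ k p p',
      embR H Ha (R p p') * embA1 H Ha (L k p) * embA2 H Ha (L k p')
        = embA1 H Ha (L k p') * embA2 H Ha (L k p) * embR H Ha (R p p'))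
    (p p' : ℂ) :
    ∀ ks : List ℕ, ks.Nodup →
      embR H Ha (R p p') * (ks.map fun k => embA1 H Ha (L k p)).prod *
          (ks.map fun k => embA2 H Ha (L k p')).prod
        = (ks.map fun k => embA1 H Ha (L k p')).prod *
            (ks.map fun k => embA2 H Ha (L k p)).prod * embR H Ha (R p p') := by
  intro ks
  induction ks with
  | nil => intro _; simp
  | cons k rest ih =>
    intro hnd
    rw [List.nodup_cons] at hnd
    obtain ⟨hk, hnd'⟩ := hnd
    have ihp := ih hnd'
    simp only [List.map_cons, List.prod_cons]
    set E := embR H Ha (R p p') with hE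
    set F := (rest.map fun l => embA1 H Ha (L l p)).prod with hF
    set G := (rest.map fun l => embA2 H Ha (L l p')).prod with hG
    set F' := (rest.map fun l => embA1 H Ha (L l p')).prod with hF'
    set G' := (rest.map fun l => embA2 H Ha (L l p)).prod with hG'
    have hgF : Commute (embA2 H Ha (L k p')) F := by
      apply Commute.list_prod_right
      intro x hx
      simp only [List.mem_map] at hx
      obtain ⟨l, hl, rfl⟩ := hx
      exact (hcomm l k p p' (fun h => hk (h ▸ hl))).symm
    have hg'F' : Commute (embA2 H Ha (L k p)) F' := by
      apply Commute.list_prod_right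
      intro x hx
      simp only [List.mem_map] at hx
      obtain ⟨l, hl, rfl⟩ := hx
      exact (hcomm l k p' p (fun h => hk (h ▸ hl))).symm
    calc E * (embA1 H Ha (L k p) * F) * (embA2 H Ha (L k p') * G)
        = (E * embA1 H Ha (L k p)) * ((F * embA2 H Ha (L k p')) * G) := by
          simp only [mul_assoc]
      _ = (E * embA1 H Ha (L k p)) * ((embA2 H Ha (L k p') * F) * G) := by
          rw [hgF.eq]
      _ = (E * embA1 H Ha (L k p) * embA2 H Ha (L k p')) * (F * G) := by
          simp only [mul_assoc]
      _ = (embA1 H Ha (L k p') * embA2 H Ha (L k p) * E) * (F * G) := by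
          rw [hRLL k p p']
      _ = (embA1 H Ha (L k p') * embA2 H Ha (L k p)) * (E * F * G) := by
          simp only [mul_assoc]
      _ = (embA1 H Ha (L k p') * embA2 H Ha (L k p)) * (F' * G' * E) := by
          rw [ihp]
      _ = embA1 H Ha (L k p') * ((embA2 H Ha (L k p) * F') * (G' * E)) := by
          simp only [mul_assoc]
      _ = embA1 H Ha (L k p') * ((F' * embA2 H Ha (L k p)) * (G' * E)) := by
          rw [hg'F'.eq]
      _ = embA1 H Ha (L k p') * F' * (embA2 H Ha (L k p) * G') * E := by
          simp only [mul_assoc]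

end Aux

/-- The train argument: if site operators at distinct sites commute (in the doubled auxiliary
space), they are intertwined at equal sites by an invertible `Ř(p,p')` which fixes the doubled
vacuum `|0,0⟩` and covacuum `⟨0,0|`, then the vacuum-projected monodromies
`S(p) = ⟨0| L₁(p) ⋯ L_n(p) |0⟩` commute for all parameter values. -/
theorem train_argument (n : ℕ)
    (L : ℕ → ℂ → Module.End ℂ (H ⊗[ℂ] Ha))
    (R : ℂ → ℂ → Module.End ℂ (Ha ⊗[ℂ] Ha))
    (v0 : Ha) (f0 : Ha →ₗ[ℂ] ℂ)
    (hcomm : ∀ k l p p', k ≠ l → Commute (embA1 H Ha (L k p)) (embA2 H Ha (L l p')))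
    (hRinv : ∀ p p', IsUnit (R p p'))
    (hRLL : ∀ k p p',
      embR H Ha (R p p') * embA1 H Ha (L k p) * embA2 H Ha (L k p')
        = embA1 H Ha (L k p') * embA2 H Ha (L k p) * embR H Ha (R p p'))
    (hket : ∀ p p', (R p p') (v0 ⊗ₜ[ℂ] v0) = v0 ⊗ₜ[ℂ] v0)
    (hbra : ∀ p p', bra2 Ha f0 ∘ₗ R p p' = bra2 Ha f0)
    (S : ℂ → Module.End ℂ H)
    (hS : ∀ p, S p = vacS H Ha v0 f0 (((List.range n).map fun k => L (k + 1) p).prod)) :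
    ∀ p p', Commute (S p) (S p') := by
  intro p p'
  obtain ⟨u, hu⟩ := hRinv p p'
  -- notation
  set T : ℂ → Module.End ℂ (H ⊗[ℂ] Ha) :=
    fun q => (((List.range n).map fun k => L (k + 1) q).prod) with hT
  set A1 : ℂ → Module.End ℂ ((H ⊗[ℂ] Ha) ⊗[ℂ] Ha) :=
    fun q => (((List.range n).map fun k => k + 1).map fun k => embA1 H Ha (L k q)).prod with hA1
  set A2 : ℂ → Module.End ℂ ((H ⊗[ℂ] Ha) ⊗[ℂ] Ha) :=
    fun q => (((List.range n).map fun k => k + 1).map fun k => embA2 H Ha (L k q)).prod with hA2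
  have hembA1T : ∀ q, embA1 H Ha (T q) = A1 q := by
    intro q
    rw [hT, hA1]
    simp only [embA1_prod, List.map_map]
    rfl
  have hembA2T : ∀ q, embA2 H Ha (T q) = A2 q := by
    intro q
    rw [hT, hA2]
    simp only [embA2_prod, List.map_map]
    rfl
  have hnodup : (((List.range n).map fun k => k + 1)).Nodup :=
    (List.nodup_range (n := n)).map (fun a b h => by omega)
  have hz := zipper H Ha L R hcomm hRLL p p' _ hnodup
  have hz' := zipper H Ha L R hcomm hRLL p' p _ hnodup
  -- invariance of bra under the inverse R-matrix, both orders
  have hbra_inv : ∀ q q' (w : Units (Module.End ℂ (Ha ⊗[ℂ] Ha))), (w : _) = R q q' →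
      bra2 Ha f0 ∘ₗ (↑w⁻¹ : Module.End ℂ (Ha ⊗[ℂ] Ha)) = bra2 Ha f0 := by
    intro q q' w hw
    have h1 : bra2 Ha f0 ∘ₗ (w : Module.End ℂ (Ha ⊗[ℂ] Ha)) = bra2 Ha f0 := by
      rw [hw]; exact hbra q q'
    have h2 : ((w : Module.End ℂ (Ha ⊗[ℂ] Ha)) ∘ₗ (↑w⁻¹ : Module.End ℂ (Ha ⊗[ℂ] Ha)))
        = LinearMap.id := by
      rw [← Module.End.mul_eq_comp, w.mul_inv]; rfl
    calc bra2 Ha f0 ∘ₗ (↑w⁻¹ : Module.End ℂ (Ha ⊗[ℂ] Ha))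
        = (bra2 Ha f0 ∘ₗ (w : Module.End ℂ (Ha ⊗[ℂ] Ha))) ∘ₗ
            (↑w⁻¹ : Module.End ℂ (Ha ⊗[ℂ] Ha)) := by rw [h1]
      _ = bra2 Ha f0 ∘ₗ ((w : Module.End ℂ (Ha ⊗[ℂ] Ha)) ∘ₗ
            (↑w⁻¹ : Module.End ℂ (Ha ⊗[ℂ] Ha))) := by rw [LinearMap.comp_assoc]
      _ = bra2 Ha f0 := by rw [h2, LinearMap.comp_id]
  -- Einv ∘ E = id pointwise
  have hEinvE : ∀ x : (H ⊗[ℂ] Ha) ⊗[ℂ] Ha,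
      embR H Ha (↑u⁻¹ : Module.End ℂ (Ha ⊗[ℂ] Ha)) (embR H Ha (R p p') x) = x := by
    intro x
    have : embR H Ha (↑u⁻¹ : Module.End ℂ (Ha ⊗[ℂ] Ha)) * embR H Ha (R p p') = 1 := by
      rw [← hu, ← embR_mul, u.inv_mul, embR_one]
    have := LinearMap.congr_fun this x
    simpa using this
  -- the key commutation of vacuum-projected monodromies
  have key : vacS H Ha v0 f0 (T p) * vacS H Ha v0 f0 (T p')
      = vacS H Ha v0 f0 (T p') * vacS H Ha v0 f0 (T p) := by
    rw [vacS_mul, vacS_mul, hembA1T p, hembA1T p', hembA2T p, hembA2T p']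
    ext h
    simp only [LinearMap.comp_apply, Module.End.mul_apply, ketMap_apply]
    set x : (H ⊗[ℂ] Ha) ⊗[ℂ] Ha := (h ⊗ₜ[ℂ] v0) ⊗ₜ[ℂ] v0 with hx
    have hKx : embR H Ha (R p p') x = x := K_inv H Ha v0 (R p p') (hket p p') h
    have hKx' : embR H Ha (R p' p) x = x := K_inv H Ha v0 (R p' p) (hket p' p) h
    have hBinv := B_inv H Ha f0 (↑u⁻¹ : Module.End ℂ (Ha ⊗[ℂ] Ha)) (hbra_inv p p' u hu)
    have h1 := LinearMap.congr_fun hz x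
    simp only [Module.End.mul_apply] at h1
    -- h1 : embR (R p p') (A1 p (A2 p' x)) = A1 p' (A2 p (embR (R p p') x))
    calc braMap H Ha f0 (braMap (H ⊗[ℂ] Ha) Ha f0 (A1 p (A2 p' x)))
        = braMap H Ha f0 (braMap (H ⊗[ℂ] Ha) Ha f0
            (embR H Ha (↑u⁻¹ : Module.End ℂ (Ha ⊗[ℂ] Ha))
              (embR H Ha (R p p') (A1 p (A2 p' x))))) := by rw [hEinvE]
      _ = braMap H Ha f0 (braMap (H ⊗[ℂ] Ha) Ha f0
            (embR H Ha (R p p') (A1 p (A2 p' x)))) := hBinv _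
      _ = braMap H Ha f0 (braMap (H ⊗[ℂ] Ha) Ha f0
            (A1 p' (A2 p (embR H Ha (R p p') x)))) := by rw [h1]
      _ = braMap H Ha f0 (braMap (H ⊗[ℂ] Ha) Ha f0 (A1 p' (A2 p x))) := by rw [hKx]
  rw [hS p, hS p']
  exact key

end
end

section
/- Let 𝔄 be an associative algebra over ℂ, H, Λ₀, Λ₁, Λ₂ ∈ 𝔄, and write ad_H(X) = [H, X] = HX - XH. Suppose (i) ad_H(Λ₀) = Λ₁, (ii) ad_H²(Λ₁) + 3·ad_H(Λ₂) = 0, and (iii) ad_H²(Λ₂) = 0. Then for every integer l ≥ 1 the higher-order relation ad_H^{2l+1}(Λ₀) - (2l+1)·ad_H^{2l}(Λ₁) - 2l(2l+1)·ad_H^{2l-1}(Λ₂) = 0 holds. -/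
/-- The HLL relation `ad_H Λ₀ = Λ₁` together with the master symmetries
`ad_H² Λ₁ + 3 ad_H Λ₂ = 0` and `ad_H² Λ₂ = 0` imply all the higher-order relations
`ad_H^{2l+1} Λ₀ - (2l+1) ad_H^{2l} Λ₁ - 2l(2l+1) ad_H^{2l-1} Λ₂ = 0` for `l ≥ 1`. -/
theorem exterior_master_symmetry_orders {𝔄 : Type*} [Ring 𝔄] [Algebra ℂ 𝔄]
    (H Λ₀ Λ₁ Λ₂ : 𝔄) (adH : 𝔄 → 𝔄) (had : ∀ X, adH X = H * X - X * H)
    (h1 : adH Λ₀ = Λ₁)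
    (h2 : adH (adH Λ₁) + 3 • adH Λ₂ = 0)
    (h3 : adH (adH Λ₂) = 0) :
    ∀ l : ℕ, 1 ≤ l →
      adH^[2 * l + 1] Λ₀ - (2 * l + 1) • adH^[2 * l] Λ₁
        - (2 * l * (2 * l + 1)) • adH^[2 * l - 1] Λ₂ = 0 := by
  have hzero : adH 0 = 0 := by rw [had]; simp
  have hneg : ∀ x, adH (-x) = -adH x := by intro x; rw [had, had]; noncomm_ring
  have hsmul : ∀ (n : ℕ) (x : 𝔄), adH (n • x) = n • adH x := by
    intro n x
    rw [had, had, smul_sub, mul_smul_comm, smul_mul_assoc]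
  -- iterates of adH kill Λ₂ from order 2 on
  have hz2 : ∀ k, adH^[k + 2] Λ₂ = 0 := by
    intro k
    induction k with
    | zero => simpa [Function.iterate_succ_apply'] using h3
    | succ n ih =>
      rw [show n + 1 + 2 = (n + 2) + 1 from rfl, Function.iterate_succ_apply', ih, hzero]
  have hΛ1 : adH (adH Λ₁) = -(3 • adH Λ₂) := by
    rw [eq_neg_iff_add_eq_zero]; exact h2
  -- iterates of adH kill Λ₁ from order 3 on
  have hz1 : ∀ k, adH^[k + 3] Λ₁ = 0 := by
    intro k
    have : ∀ m, adH^[m + 2] Λ₁ = -((3 : ℕ) • adH^[m + 1] Λ₂) := by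
      intro m
      induction m with
      | zero => simpa using hΛ1
      | succ n ih =>
        rw [show n + 1 + 2 = (n + 2) + 1 from rfl, Function.iterate_succ_apply', ih,
          hneg, hsmul, ← Function.iterate_succ_apply' adH (n + 1) Λ₂]
    rw [show k + 3 = (k + 1) + 2 from rfl, this, hz2, smul_zero, neg_zero]
  intro l hl
  obtain ⟨m, rfl⟩ : ∃ m, l = m + 1 := ⟨l - 1, (Nat.succ_pred_eq_of_pos hl).symm⟩
  have hΛ0 : ∀ k, adH^[k + 1] Λ₀ = adH^[k] Λ₁ := by
    intro k; rw [Function.iterate_succ_apply, h1]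
  cases m with
  | zero =>
    simp only [Nat.mul_one, show 2 * 1 + 1 = 2 + 1 from rfl]
    rw [hΛ0 2]
    show adH^[2] Λ₁ - 3 • adH^[2] Λ₁ - 6 • adH^[2 * 1 - 1] Λ₂ = 0
    have h2' : adH^[2] Λ₁ = -(3 • adH Λ₂) := hΛ1
    rw [h2']
    show -(3 • adH Λ₂) - 3 • -(3 • adH Λ₂) - 6 • adH^[1] Λ₂ = 0
    simp only [Function.iterate_one, smul_neg, smul_smul]
    abel
  | succ n =>
    have e0 : 2 * (n + 1 + 1) + 1 = (2 * n + 2) + 3 := by ring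
    have e1 : 2 * (n + 1 + 1) = (2 * n + 1) + 3 := by ring
    have e2 : 2 * (n + 1 + 1) - 1 = (2 * n + 1) + 2 := by omega
    rw [e0, show (2 * n + 2) + 3 = ((2 * n + 2) + 2) + 1 from rfl, hΛ0,
      show (2 * n + 2) + 2 = (2 * n + 1) + 3 from rfl, hz1, e2, hz2, e1, hz1]
    simp
end
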